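/- arXiv:2508.05713 — 6 statements merged into one kernel-verified Lean document; each statement's English description precedes it below -/
import Mathlib

section
/- Suppose f satisfies the uniqueness condition. Then for every word I and every m ≥ 1, f_I has a fixed point if and only if the m-th iterate f_I^m has a fixed point. -/
/-!
If `x` is a fixed point of `f_{I^m}`, so is `f^[|I|] x`: moving one copy of `I` from the
front of `I^m` to its back gives `I^m` again. The uniqueness condition then forces
`f^[|I|] x = x`, and a point that returns after the first block `I` of `I^m` is a fixed
point of `f_I`.
-/

/-- `x` is a fixed point of the composite partial map `f_I` determined by the word `I`:
the composite of the restrictions of `f` to the classes `X_{i_j}` (where `c` records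
the class of each point) is defined at `x` and returns `x`. -/
def IsWordFixedPt {X : Type*} {k : ℕ} (f : X → X) (c : X → Fin k)
    (I : List (Fin k)) (x : X) : Prop :=
  f^[I.length] x = x ∧ ∀ j : Fin I.length, c (f^[(j : ℕ)] x) = I.get j

/-- The uniqueness condition: every composite `f_I` over a nonempty word `I`
has at most one fixed point. -/
def UniqCond {X : Type*} {k : ℕ} (f : X → X) (c : X → Fin k) : Prop :=
  ∀ I : List (Fin k), I ≠ [] → ∀ x y : X,
    IsWordFixedPt f c I x → IsWordFixedPt f c I y → x = y

section WordFixedPt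

variable {X : Type*} {k : ℕ} {f : X → X} {c : X → Fin k} {I I' : List (Fin k)} {x : X}

theorem isWordFixedPt_iff :
    IsWordFixedPt f c I x ↔
      f^[I.length] x = x ∧ ∀ j (hj : j < I.length), c (f^[j] x) = I[j] := by
  simp [IsWordFixedPt, Fin.forall_iff]

theorem isWordFixedPt_nil : IsWordFixedPt f c [] x :=
  isWordFixedPt_iff.2 ⟨rfl, by simp⟩

theorem IsWordFixedPt.append (h : IsWordFixedPt f c I x) (h' : IsWordFixedPt f c I' x) :
    IsWordFixedPt f c (I ++ I') x := by
  rw [isWordFixedPt_iff] at *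
  refine ⟨by rw [List.length_append, Nat.add_comm, Function.iterate_add_apply, h.1, h'.1], ?_⟩
  intro j hj
  rcases lt_or_ge j I.length with hjI | hjI
  · rw [List.getElem_append_left hjI, h.2 j hjI]
  · obtain ⟨i, rfl⟩ := Nat.exists_eq_add_of_le' hjI
    rw [List.getElem_append_right hjI, Function.iterate_add_apply, h.1]
    simpa using h'.2 i (by rw [List.length_append] at hj; omega)

theorem IsWordFixedPt.flatten_replicate (h : IsWordFixedPt f c I x) (m : ℕ) :
    IsWordFixedPt f c (List.replicate m I).flatten x := by
  induction m with
  | zero => exact isWordFixedPt_nil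
  | succ m ih => exact h.append ih

theorem IsWordFixedPt.of_append (h : IsWordFixedPt f c (I ++ I') x)
    (hx : f^[I.length] x = x) : IsWordFixedPt f c I x := by
  rw [isWordFixedPt_iff] at *
  refine ⟨hx, fun j hj => ?_⟩
  rw [h.2 j (by rw [List.length_append]; omega), List.getElem_append_left hj]

theorem IsWordFixedPt.iterate_length_append_comm (h : IsWordFixedPt f c (I ++ I') x) :
    IsWordFixedPt f c (I' ++ I) (f^[I.length] x) := by
  rw [isWordFixedPt_iff] at *
  obtain ⟨hper, hcls⟩ := h
  simp only [List.length_append] at hper hcls ⊢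
  refine ⟨by rw [← Function.iterate_add_apply, Nat.add_comm, Function.iterate_add_apply,
    Nat.add_comm I'.length, hper], ?_⟩
  intro j hj
  rw [← Function.iterate_add_apply]
  rcases lt_or_ge j I'.length with hjI | hjI
  · rw [List.getElem_append_left hjI, hcls _ (by omega), List.getElem_append_right (by omega)]
    simp
  · obtain ⟨i, rfl⟩ := Nat.exists_eq_add_of_le' hjI
    rw [List.getElem_append_right hjI,
      show i + I'.length + I.length = i + (I.length + I'.length) by omega, Function.iterate_add_apply,
      hper, hcls i (by omega), List.getElem_append_left (by omega)]
    simp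

end WordFixedPt

theorem List.flatten_replicate_succ {α : Type*} (l : List α) (m : ℕ) :
    (replicate (m + 1) l).flatten = l ++ (replicate m l).flatten := by
  simp [replicate_succ]

theorem List.flatten_replicate_append_comm {α : Type*} (l : List α) (m : ℕ) :
    (replicate m l).flatten ++ l = l ++ (replicate m l).flatten := by
  rw [← flatten_replicate_succ, replicate_succ', flatten_concat]

theorem stmt_7_general {X : Type*} {k : ℕ} (f : X → X) (c : X → Fin k)
    (hu : UniqCond f c) (I : List (Fin k)) (m : ℕ) (hm : 1 ≤ m) :
    (∃ x, IsWordFixedPt f c I x) ↔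
      ∃ x, IsWordFixedPt f c (List.flatten (List.replicate m I)) x := by
  refine ⟨fun ⟨x, hx⟩ => ⟨x, hx.flatten_replicate m⟩, fun ⟨x, hx⟩ => ?_⟩
  rcases eq_or_ne I [] with rfl | hI
  · exact ⟨x, isWordFixedPt_nil⟩
  obtain ⟨n, rfl⟩ := Nat.exists_eq_add_of_le' hm
  rw [List.flatten_replicate_succ] at hx
  have hshift := hx.iterate_length_append_comm
  rw [List.flatten_replicate_append_comm] at hshift
  have hper : f^[I.length] x = x := hu _ (by simp [hI]) _ _ hshift hx
  exact ⟨x, hx.of_append hper⟩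

theorem stmt_7 {X : Type*} {k : ℕ} (f : X → X) (c : X → Fin k)
    (hpart : ∀ i : Fin k, Set.InjOn f {x | c x = i})
    (hu : UniqCond f c) (I : List (Fin k)) (hI : I ≠ []) (m : ℕ) (hm : 1 ≤ m) :
    (∃ x, IsWordFixedPt f c I x) ↔
      ∃ x, IsWordFixedPt f c (List.flatten (List.replicate m I)) x :=
  stmt_7_general f c hu I m hm
end

section
/- If f satisfies the uniqueness condition, x is a periodic point with minimal period m, and I = (i₁,…,i_m) is the word with f^{j−1}(x) ∈ X_{i_j}, then I is aperiodic: no proper cyclic rotation of I equals I. -/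
theorem IsWordFixedPt.rotate {X : Type*} {k : ℕ} {f : X → X} {c : X → Fin k}
    {I : List (Fin k)} {x : X} (h : IsWordFixedPt f c I x) (j : ℕ) :
    IsWordFixedPt f c (I.rotate j) (f^[j] x) := by
  have hper : Function.IsPeriodicPt f I.length x := h.1
  refine ⟨by rw [List.length_rotate]; exact hper.apply_iterate j, fun i => ?_⟩
  rw [List.get_rotate, ← h.2, ← Function.iterate_add_apply, hper.iterate_mod_apply]

theorem stmt_8_general {X : Type*} {k : ℕ} (f : X → X) (c : X → Fin k)
    (hu : UniqCond f c) (x : X) (m : ℕ)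
    (hfix : f^[m] x = x) (hmin : ∀ j, 0 < j → j < m → f^[j] x ≠ x)
    (I : List (Fin k)) (hlen : I.length = m)
    (hI : ∀ j : Fin I.length, I.get j = c (f^[(j : ℕ)] x)) :
    ∀ j, 0 < j → j < m → I.rotate j ≠ I := by
  intro j hj hjm hrot
  have hx : IsWordFixedPt f c I x := ⟨hlen ▸ hfix, fun i => (hI i).symm⟩
  have hI_ne : I ≠ [] := List.ne_nil_of_length_pos (by omega)
  have hxj : IsWordFixedPt f c I (f^[j] x) := hrot ▸ hx.rotate j
  exact hmin j hj hjm (hu I hI_ne _ _ hxj hx)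

theorem stmt_8 {X : Type*} {k : ℕ} (f : X → X) (c : X → Fin k)
    (hpart : ∀ i : Fin k, Set.InjOn f {x | c x = i})
    (hu : UniqCond f c) (x : X) (m : ℕ) (hm : 0 < m)
    (hfix : f^[m] x = x) (hmin : ∀ j, 0 < j → j < m → f^[j] x ≠ x)
    (I : List (Fin k)) (hlen : I.length = m)
    (hI : ∀ j : Fin I.length, I.get j = c (f^[(j : ℕ)] x)) :
    ∀ j, 0 < j → j < m → I.rotate j ≠ I :=
  stmt_8_general f c hu x m hfix hmin I hlen hI
end

section
/- If n is a periodic point of the Collatz map with minimal period m, then the m-tuple of parities ((−1)^n, (−1)^{f(n)}, …, (−1)^{f^{m−1}(n)}) is not fixed by any nontrivial cyclic rotation. -/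
/-!
If `x` and `y` have the same parity, one Collatz step multiplies `x - y` by `3` (both odd) or by
`1/2` (both even). So if the first `k` iterates of `x` and `y` have the same parities, then
`2^e (f^k x - f^k y) = 3^o (x - y)` with `o + e = k`. For two `k`-periodic points this reads
`2^e (x - y) = 3^o (x - y)`, and `2^e ≠ 3^o` for `k > 0` forces `x = y`. A rotation by `j` fixing
the parity vector of the cycle through `n` makes `n` and `f^j n` two such points, so `f^j n = n`.
-/

/-- The Collatz map on the positive integers (value at `0` irrelevant). -/
def collatz (n : ℕ) : ℕ := if Odd n then 3 * n + 1 else n / 2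

open Function

lemma collatz_of_odd {x : ℕ} (h : Odd x) : collatz x = 3 * x + 1 := if_pos h

lemma two_mul_collatz_of_even {x : ℕ} (h : Even x) : 2 * collatz x = x := by
  rw [collatz, if_neg (Nat.not_odd_iff_even.2 h), Nat.two_mul_div_two_of_even h]

lemma exists_two_pow_mul_collatz_sub {x y : ℕ} (hxy : Even x ↔ Even y) :
    ∃ o e, o + e = 1 ∧ (2 : ℤ) ^ e * (collatz x - collatz y) = 3 ^ o * ((x : ℤ) - y) := by
  rcases Nat.even_or_odd x with hx | hx
  · refine ⟨0, 1, rfl, ?_⟩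
    have hx' : (2 * collatz x : ℤ) = x := mod_cast two_mul_collatz_of_even hx
    have hy' : (2 * collatz y : ℤ) = y := mod_cast two_mul_collatz_of_even (hxy.1 hx)
    rw [← hx', ← hy']
    ring
  · have hy : Odd y := Nat.not_even_iff_odd.1 fun hy => Nat.not_even_iff_odd.2 hx (hxy.2 hy)
    refine ⟨1, 0, rfl, ?_⟩
    rw [collatz_of_odd hx, collatz_of_odd hy]
    push_cast
    ring

lemma exists_two_pow_mul_collatz_iterate_sub {a b k : ℕ}
    (hpar : ∀ i < k, (Even (collatz^[i] a) ↔ Even (collatz^[i] b))) :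
    ∃ o e, o + e = k ∧
      (2 : ℤ) ^ e * (collatz^[k] a - collatz^[k] b) = 3 ^ o * ((a : ℤ) - b) := by
  induction k with
  | zero => exact ⟨0, 0, rfl, by simp⟩
  | succ k ih =>
    obtain ⟨o, e, hoe, heq⟩ := ih fun i hi => hpar i (by omega)
    obtain ⟨o', e', hoe', heq'⟩ := exists_two_pow_mul_collatz_sub (hpar k k.lt_succ_self)
    refine ⟨o' + o, e' + e, by omega, ?_⟩
    rw [iterate_succ_apply', iterate_succ_apply']
    calc (2 : ℤ) ^ (e' + e) * (collatz (collatz^[k] a) - collatz (collatz^[k] b))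
        = 2 ^ e * (2 ^ e' * (collatz (collatz^[k] a) - collatz (collatz^[k] b))) := by ring
      _ = 3 ^ o' * (2 ^ e * (collatz^[k] a - collatz^[k] b)) := by rw [heq']; ring
      _ = 3 ^ (o' + o) * ((a : ℤ) - b) := by rw [heq]; ring

lemma two_pow_ne_three_pow {e o : ℕ} (h : o + e ≠ 0) : (2 : ℤ) ^ e ≠ 3 ^ o := by
  intro h'
  rcases e with _ | e
  · rw [pow_zero, eq_comm, pow_eq_one_iff_of_ne_zero] at h' <;> omega
  · have : Even ((3 : ℤ) ^ o) := h' ▸ Int.even_pow.2 ⟨even_two, e.succ_ne_zero⟩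
    exact absurd (Int.even_pow.1 this).1 (by decide)

lemma eq_of_isPeriodicPt_collatz_of_even_iterate_iff {a b k : ℕ} (hk : 0 < k)
    (ha : IsPeriodicPt collatz k a) (hb : IsPeriodicPt collatz k b)
    (hpar : ∀ i < k, (Even (collatz^[i] a) ↔ Even (collatz^[i] b))) : a = b := by
  obtain ⟨o, e, hoe, heq⟩ := exists_two_pow_mul_collatz_iterate_sub hpar
  rw [ha.eq, hb.eq] at heq
  have hsub : (a : ℤ) - b = 0 :=
    (mul_eq_mul_right_iff.1 heq).resolve_left (two_pow_ne_three_pow (by omega))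
  omega

lemma even_iff_of_neg_one_pow_eq {a b : ℕ} (h : (-1 : ℤ) ^ a = (-1) ^ b) : Even a ↔ Even b := by
  rw [← neg_one_pow_eq_one_iff_even (R := ℤ) (by decide), h,
    neg_one_pow_eq_one_iff_even (by decide)]

lemma List.apply_add_mod_eq_of_rotate_map_range {α : Type*} {g : ℕ → α} {m j : ℕ}
    (h : ((List.range m).map g).rotate j = (List.range m).map g) {i : ℕ} (hi : i < m) :
    g ((i + j) % m) = g i := by
  simpa [List.getElem?_rotate, hi, Nat.mod_lt _ (i.zero_le.trans_lt hi)] using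
    congrArg (·[i]?) h

theorem stmt_9_general (n m : ℕ)
    (hfix : collatz^[m] n = n)
    (hmin : ∀ j, 0 < j → j < m → collatz^[j] n ≠ n) :
    ∀ j, 0 < j → j < m →
      ((List.range m).map fun i => ((-1 : ℤ)) ^ (collatz^[i] n)).rotate j ≠
        (List.range m).map fun i => ((-1 : ℤ)) ^ (collatz^[i] n) := by
  intro j hj hjm hrot
  have hper : IsPeriodicPt collatz m n := hfix
  refine hmin j hj hjm (eq_of_isPeriodicPt_collatz_of_even_iterate_iff
    (hj.trans hjm) (hper.apply_iterate j) hper fun i hi => ?_)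
  rw [← iterate_add_apply, ← hper.iterate_mod_apply]
  exact even_iff_of_neg_one_pow_eq (List.apply_add_mod_eq_of_rotate_map_range hrot hi)

theorem stmt_9 (n m : ℕ) (hn : 1 ≤ n) (hm : 0 < m)
    (hfix : collatz^[m] n = n)
    (hmin : ∀ j, 0 < j → j < m → collatz^[j] n ≠ n) :
    ∀ j, 0 < j → j < m →
      ((List.range m).map fun i => ((-1 : ℤ)) ^ (collatz^[i] n)).rotate j ≠
        (List.range m).map fun i => ((-1 : ℤ)) ^ (collatz^[i] n) :=
  stmt_9_general n m hfix hmin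
end

section
/- The qx+d function satisfies the totally uniqueness condition: the map n ↦ (parity of f^{j−1}(n))_{j∈ℕ} from ℕ≥1 to {1,2}^ℕ is injective. That is, if two positive integers m, n satisfy that f^j(m) and f^j(n) have the same parity for all j ≥ 0, then m = n. -/
/-- The `qx+d` function. -/
def fqd (q d n : ℕ) : ℕ := if Odd n then q * n + d else n / 2

/-!
If `m` and `n` have the same parity itinerary under `f = f_{q,d}`, then `m ≡ n [MOD 2 ^ k]` for
every `k`, by induction on `k`: for even `m, n` the itineraries of `m / 2, n / 2` agree, and for odd
`m, n` those of `(q m + d) / 2, (q n + d) / 2` agree, so the induction hypothesis lifts back through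
multiplication by `2` and, as `q` is odd, cancellation of `q`. Taking `2 ^ k > m, n` gives `m = n`.
-/

def SameParityItinerary (f : ℕ → ℕ) (m n : ℕ) : Prop :=
  ∀ j, Odd (f^[j] m) ↔ Odd (f^[j] n)

lemma SameParityItinerary.iterate {f : ℕ → ℕ} {m n : ℕ} (h : SameParityItinerary f m n)
    (s : ℕ) : SameParityItinerary f (f^[s] m) (f^[s] n) := fun j => by
  simpa only [← Function.iterate_add_apply] using h (j + s)

lemma Nat.modEq_two_pow_succ_of_div_two {a b k : ℕ} (ha : Even a) (hb : Even b)
    (h : a / 2 ≡ b / 2 [MOD 2 ^ k]) : a ≡ b [MOD 2 ^ (k + 1)] := by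
  simpa only [Nat.two_mul_div_two_of_even ha, Nat.two_mul_div_two_of_even hb, ← pow_succ']
    using h.mul_left' 2

section

variable {q d : ℕ}

lemma fqd_of_odd {n : ℕ} (hn : Odd n) : fqd q d n = q * n + d := if_pos hn

lemma fqd_of_even {n : ℕ} (hn : Even n) : fqd q d n = n / 2 :=
  if_neg (Nat.not_odd_iff_even.2 hn)

lemma fqd_iterate_two_of_odd (hq : Odd q) (hd : Odd d) {n : ℕ} (hn : Odd n) :
    (fqd q d)^[2] n = (q * n + d) / 2 := by
  rw [Function.iterate_succ_apply, Function.iterate_one, fqd_of_odd hn,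
    fqd_of_even ((hq.mul hn).add_odd hd)]

lemma modEq_two_pow_of_sameParityItinerary (hq : Odd q) (hd : Odd d) (k : ℕ) :
    ∀ {m n : ℕ}, SameParityItinerary (fqd q d) m n → m ≡ n [MOD 2 ^ k] := by
  induction k with
  | zero => exact fun _ => Nat.modEq_one
  | succ k ih =>
    intro m n h
    rcases Nat.even_or_odd m with hm | hm
    · have hn : Even n := Nat.not_odd_iff_even.1 (mt (h 0).2 (Nat.not_odd_iff_even.2 hm))
      have halves := ih (h.iterate 1)
      rw [Function.iterate_one, fqd_of_even hm, fqd_of_even hn] at halves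
      exact Nat.modEq_two_pow_succ_of_div_two hm hn halves
    · have hn : Odd n := (h 0).1 hm
      have halves := ih (h.iterate 2)
      rw [fqd_iterate_two_of_odd hq hd hm, fqd_iterate_two_of_odd hq hd hn] at halves
      have hlift := Nat.modEq_two_pow_succ_of_div_two ((hq.mul hm).add_odd hd)
        ((hq.mul hn).add_odd hd) halves
      exact (hlift.add_right_cancel' d).cancel_left_of_coprime
        ((Nat.coprime_two_left.2 hq).pow_left _)

end

theorem stmt_14 (q d : ℕ) (hq : Odd q) (hd : Odd d) :
    ∀ m n : ℕ, 1 ≤ m → 1 ≤ n →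
      (∀ j : ℕ, Odd ((fqd q d)^[j] m) ↔ Odd ((fqd q d)^[j] n)) → m = n := by
  intro m n _ _ h
  have hlt : m + n < 2 ^ (m + n) := Nat.lt_two_pow_self
  exact (modEq_two_pow_of_sameParityItinerary hq hd (m + n) h).eq_of_lt_of_lt (by omega) (by omega)
end

section
/- For every f-invariant set K ⊆ X, the closed subspace H_K = closure of span{e_x : x ∈ K} is a reducing subspace for the C*-algebra generated by T₁,…,T_k (i.e., it is invariant under each Tᵢ and Tᵢ*), and the map K ↦ H_K is injective and order-preserving. -/
/-!
Write `H_K` for the closed span of `{e x | x ∈ K}`. By Parseval's identity `H_K` is the orthogonal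
complement of `H_{Kᶜ}`, and `e x ∈ H_K ↔ x ∈ K`, which gives injectivity. The condition
`f '' K ⊆ K` makes `H_K` invariant under each `Tᵢ`; the condition `f ⁻¹' K ⊆ K` says
`f '' Kᶜ ⊆ Kᶜ`, so `H_{Kᶜ}` is `Tᵢ`-invariant as well and hence `H_K = H_{Kᶜ}ᗮ` is
`Tᵢ*`-invariant.
-/

open Submodule

namespace HilbertBasis

variable {ι 𝕜 E : Type*} [RCLike 𝕜] [NormedAddCommGroup E] [InnerProductSpace 𝕜 E]
  [CompleteSpace E] (b : HilbertBasis ι 𝕜 E)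

theorem topologicalClosure_span_image_eq_orthogonal (s : Set ι) :
    (span 𝕜 (b '' s)).topologicalClosure = (span 𝕜 (b '' sᶜ))ᗮ := by
  refine le_antisymm ?_ ?_
  · refine (span 𝕜 (b '' s)).topologicalClosure_minimal ?_ (isClosed_orthogonal _)
    refine isOrtho_iff_le.1 (isOrtho_span.2 ?_)
    rintro _ ⟨i, hi, rfl⟩ _ ⟨j, hj, rfl⟩
    exact b.orthonormal.inner_eq_zero (ne_of_mem_of_not_mem hi hj)
  · rw [← orthogonal_orthogonal_eq_closure]
    intro v hv u hu
    refine (b.tsum_inner_mul_inner u v).symm.trans ((tsum_congr fun i => ?_).trans tsum_zero)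
    by_cases hi : i ∈ s
    · rw [inner_left_of_mem_orthogonal (subset_span (Set.mem_image_of_mem b hi)) hu, zero_mul]
    · have hi' : b i ∈ span 𝕜 (b '' sᶜ) := subset_span (Set.mem_image_of_mem b hi)
      rw [inner_right_of_mem_orthogonal hi' hv, mul_zero]

theorem mem_topologicalClosure_span_image_iff {s : Set ι} {i : ι} :
    b i ∈ (span 𝕜 (b '' s)).topologicalClosure ↔ i ∈ s := by
  refine ⟨fun h => ?_, fun hi => le_topologicalClosure _ (subset_span (Set.mem_image_of_mem b hi))⟩
  rw [topologicalClosure_span_image_eq_orthogonal] at h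
  by_contra hi
  have hi' : b i ∈ span 𝕜 (b '' sᶜ) := subset_span (Set.mem_image_of_mem b hi)
  exact b.orthonormal.ne_zero i (inner_self_eq_zero.1 (inner_right_of_mem_orthogonal hi' h))

theorem topologicalClosure_span_image_injective :
    Function.Injective fun s : Set ι => (span 𝕜 (b '' s)).topologicalClosure := by
  intro s t hst
  ext i
  rw [← b.mem_topologicalClosure_span_image_iff, ← b.mem_topologicalClosure_span_image_iff]
  exact SetLike.ext_iff.1 hst (b i)

end HilbertBasis

theorem Submodule.span_image_mem_invtSubmodule {R M X : Type*} [Semiring R] [AddCommMonoid M]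
    [Module R M] {e : X → M} {f : X → X} {T : M →ₗ[R] M}
    (hT : ∀ x, T (e x) = e (f x) ∨ T (e x) = 0) {K : Set X} (hK : f '' K ⊆ K) :
    span R (e '' K) ∈ Module.End.invtSubmodule T := by
  rw [Module.End.mem_invtSubmodule, span_le]
  rintro _ ⟨x, hx, rfl⟩
  rcases hT x with h | h <;> rw [SetLike.mem_coe, mem_comap, h]
  · exact subset_span ⟨f x, hK ⟨x, hx, rfl⟩, rfl⟩
  · exact zero_mem _

theorem stmt_16_general {X : Type*} {k : ℕ} (f : X → X) (c : X → Fin k)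
    {H : Type*} [NormedAddCommGroup H] [InnerProductSpace ℂ H] [CompleteSpace H]
    (e : HilbertBasis X ℂ H) (T : Fin k → H →L[ℂ] H)
    (hT : ∀ i x, T i (e x) = if c x = i then e (f x) else 0) :
    (∀ K : Set X, f '' K ⊆ K → f ⁻¹' K ⊆ K → ∀ i : Fin k,
      ∀ v ∈ (Submodule.span ℂ (⇑e '' K)).topologicalClosure,
        T i v ∈ (Submodule.span ℂ (⇑e '' K)).topologicalClosure ∧
        ContinuousLinearMap.adjoint (T i) v ∈ (Submodule.span ℂ (⇑e '' K)).topologicalClosure) ∧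
    (∀ K K' : Set X, f '' K ⊆ K → f ⁻¹' K ⊆ K → f '' K' ⊆ K' → f ⁻¹' K' ⊆ K' →
      (Submodule.span ℂ (⇑e '' K)).topologicalClosure =
        (Submodule.span ℂ (⇑e '' K')).topologicalClosure → K = K') ∧
    (∀ K K' : Set X, K ⊆ K' →
      (Submodule.span ℂ (⇑e '' K)).topologicalClosure ≤
        (Submodule.span ℂ (⇑e '' K')).topologicalClosure) := by
  refine ⟨fun K hKf hKp i v hv => ?_,
    fun K K' _ _ _ _ h => e.topologicalClosure_span_image_injective h,
    fun K K' h => topologicalClosure_mono (span_mono (Set.image_mono h))⟩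
  have hshift : ∀ x, T i (e x) = e (f x) ∨ T i (e x) = 0 := fun x => by
    rw [hT]; split_ifs <;> simp
  refine ⟨topologicalClosure_mem_invtSubmodule (span_image_mem_invtSubmodule hshift hKf) hv, ?_⟩
  have hKc : f '' Kᶜ ⊆ Kᶜ := Set.image_subset_iff.2 (Set.compl_subset_compl.2 hKp)
  rw [e.topologicalClosure_span_image_eq_orthogonal] at hv ⊢
  exact ContinuousLinearMap.orthogonal_mem_invtSubmodule (T := (T i).adjoint)
    (by simpa using span_image_mem_invtSubmodule hshift hKc) hv

theorem stmt_16 {X : Type*} [Countable X] {k : ℕ} (f : X → X) (c : X → Fin k)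
    (hpart : ∀ i : Fin k, Set.InjOn f {x | c x = i})
    {H : Type*} [NormedAddCommGroup H] [InnerProductSpace ℂ H] [CompleteSpace H]
    (e : HilbertBasis X ℂ H) (T : Fin k → H →L[ℂ] H)
    (hT : ∀ i x, T i (e x) = if c x = i then e (f x) else 0) :
    (∀ K : Set X, f '' K ⊆ K → f ⁻¹' K ⊆ K → ∀ i : Fin k,
      ∀ v ∈ (Submodule.span ℂ (⇑e '' K)).topologicalClosure,
        T i v ∈ (Submodule.span ℂ (⇑e '' K)).topologicalClosure ∧
        ContinuousLinearMap.adjoint (T i) v ∈ (Submodule.span ℂ (⇑e '' K)).topologicalClosure) ∧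
    (∀ K K' : Set X, f '' K ⊆ K → f ⁻¹' K ⊆ K → f '' K' ⊆ K' → f ⁻¹' K' ⊆ K' →
      (Submodule.span ℂ (⇑e '' K)).topologicalClosure =
        (Submodule.span ℂ (⇑e '' K')).topologicalClosure → K = K') ∧
    (∀ K K' : Set X, K ⊆ K' →
      (Submodule.span ℂ (⇑e '' K)).topologicalClosure ≤
        (Submodule.span ℂ (⇑e '' K')).topologicalClosure) :=
  stmt_16_general f c e T hT
end

section
/- Assume f satisfies the totally uniqueness condition. Then every reducing subspace M for the operators T₁,…,T_k and their adjoints is of the form closure span{e_x : x ∈ K} for the f-invariant set K = {x ∈ X : ⟨a, e_x⟩ ≠ 0 for some a ∈ M}; hence K ↦ H_K is a bijection between f-invariant sets and reducing subspaces. -/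
/-! For `a` in a reducing subspace `M` and `x ∈ X`, apply to `a` the operators `W* W`, where `W`
is the product of the `Tᵢ` that follows the first `n` classes of the orbit of `x`. They keep `a`
in `M` and only retain the coefficients of those `e y` whose first `n` classes match those of `x`.
By total uniqueness these cylinders shrink to `{x}`, so the vectors converge to `⟪e x, a⟫ • e x`;
as `M` is closed, `e x ∈ M` as soon as `⟪e x, a⟫ ≠ 0`. Invariance of the support set under `f`
and `f⁻¹` follows from `T (c x) (e x) = e (f x)` and `T (c x)* (e (f x)) = e x`. -/

open Filter Topology
open scoped InnerProductSpace

namespace HilbertBasis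

variable {ι 𝕜 E : Type*} [RCLike 𝕜] [NormedAddCommGroup E] [InnerProductSpace 𝕜 E]
  (b : HilbertBasis ι 𝕜 E)

theorem ext_inner {x y : E} (h : ∀ i, ⟪b i, x⟫_𝕜 = ⟪b i, y⟫_𝕜) : x = y :=
  b.repr.injective <| lp.ext <| funext fun i => by simp only [b.repr_apply_apply, h]

theorem hasSum_norm_inner_sq (x : E) : HasSum (fun i => ‖⟪b i, x⟫_𝕜‖ ^ 2) (‖x‖ ^ 2) := by
  simpa [b.repr_apply_apply] using lp.hasSum_norm (p := 2) (by norm_num) (b.repr x)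

theorem tendsto_zero_of_norm_inner_le {α : Type*} {l : Filter α} {w : α → E} (a : E)
    (hle : ∀ n i, ‖⟪b i, w n⟫_𝕜‖ ≤ ‖⟪b i, a⟫_𝕜‖)
    (hlim : ∀ i, Tendsto (fun n => ⟪b i, w n⟫_𝕜) l (𝓝 0)) :
    Tendsto w l (𝓝 0) := by
  have hsq : Tendsto (fun n => ‖w n‖ ^ 2) l (𝓝 0) := by
    simp_rw [← (b.hasSum_norm_inner_sq _).tsum_eq]
    have := tendsto_tsum_of_dominated_convergence (g := fun _ => (0 : ℝ))
      (b.hasSum_norm_inner_sq a).summable (fun i => by simpa using (hlim i).norm.pow 2)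
      (Eventually.of_forall fun n i => by simpa using pow_le_pow_left₀ (norm_nonneg _) (hle n i) 2)
    rwa [tsum_zero] at this
  rw [tendsto_zero_iff_norm_tendsto_zero]
  simpa [Real.sqrt_sq (norm_nonneg _)] using hsq.sqrt

theorem eq_topologicalClosure_span_of_mem (M : Submodule 𝕜 E) (hM : IsClosed (M : Set E))
    (h : ∀ i, ∀ a ∈ M, ⟪a, b i⟫_𝕜 ≠ 0 → b i ∈ M) :
    M = (Submodule.span 𝕜 (b '' {i | ∃ a ∈ M, ⟪a, b i⟫_𝕜 ≠ 0})).topologicalClosure := by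
  refine le_antisymm (fun a ha => ?_) <| Submodule.topologicalClosure_minimal _
    (Submodule.span_le.mpr <| by rintro _ ⟨i, ⟨a, ha, hi⟩, rfl⟩; exact h i a ha hi) hM
  refine mem_closure_of_tendsto (b.hasSum_repr a) (Eventually.of_forall fun s => ?_)
  refine Submodule.sum_mem _ fun i _ => ?_
  by_cases hi : ⟪a, b i⟫_𝕜 = 0
  · rw [b.repr_apply_apply, inner_eq_zero_symm.mp hi, zero_smul]
    exact Submodule.zero_mem _
  · exact Submodule.smul_mem _ _ (Submodule.subset_span ⟨i, ⟨a, ha, hi⟩, rfl⟩)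

end HilbertBasis

def Submodule.IsReducing {ι 𝕜 E : Type*} [RCLike 𝕜] [NormedAddCommGroup E]
    [InnerProductSpace 𝕜 E] [CompleteSpace E] (M : Submodule 𝕜 E) (T : ι → E →L[𝕜] E) : Prop :=
  ∀ i, ∀ v ∈ M, T i v ∈ M ∧ ContinuousLinearMap.adjoint (T i) v ∈ M

namespace ShiftSystem

open ContinuousLinearMap

variable {X 𝕜 H : Type*} [RCLike 𝕜] [NormedAddCommGroup H] [InnerProductSpace 𝕜 H]
  [CompleteSpace H] {k : ℕ} {f : X → X} {c : X → Fin k} {T : Fin k → H →L[𝕜] H}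

variable (f c T) in
noncomputable def cylinderProj : ℕ → X → H →L[𝕜] H
  | 0, _ => 1
  | n + 1, x => adjoint (T (c x)) ∘L cylinderProj n (f x) ∘L T (c x)

theorem cylinderProj_mem {M : Submodule 𝕜 H} (hM : M.IsReducing T) (n : ℕ) (x : X) {a : H}
    (ha : a ∈ M) : cylinderProj f c T n x a ∈ M := by
  induction n generalizing x a with
  | zero => exact ha
  | succ n ih => exact (hM _ _ (ih (f x) (hM _ a ha).1)).2

variable (e : HilbertBasis X 𝕜 H)

theorem inner_basis_adjoint (hT : ∀ i x, T i (e x) = if c x = i then e (f x) else 0)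
    (i : Fin k) (x : X) (v : H) :
    ⟪e x, adjoint (T i) v⟫_𝕜 = if c x = i then ⟪e (f x), v⟫_𝕜 else 0 := by
  rw [adjoint_inner_right, hT]
  split_ifs <;> simp

theorem adjoint_apply_basis_apply (hT : ∀ i x, T i (e x) = if c x = i then e (f x) else 0)
    (hinj : ∀ i, Set.InjOn f {x | c x = i}) (x : X) :
    adjoint (T (c x)) (e (f x)) = e x := by
  classical
  refine e.ext_inner fun y => ?_
  simp only [inner_basis_adjoint e hT, orthonormal_iff_ite.mp e.orthonormal]
  by_cases hyx : y = x
  · simp [hyx]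
  rw [if_neg hyx]
  split_ifs with hcy hfy
  exacts [absurd (hinj (c x) hcy rfl hfy) hyx, rfl, rfl]

theorem inner_basis_cylinderProj (hT : ∀ i x, T i (e x) = if c x = i then e (f x) else 0)
    (hinj : ∀ i, Set.InjOn f {x | c x = i}) (n : ℕ) (x y : X) (a : H) :
    ⟪e y, cylinderProj f c T n x a⟫_𝕜 =
      if ∀ j < n, c (f^[j] y) = c (f^[j] x) then ⟪e y, a⟫_𝕜 else 0 := by
  induction n generalizing x y a with
  | zero => simp [cylinderProj]
  | succ n ih =>
    simp only [cylinderProj, coe_comp, Function.comp_apply, inner_basis_adjoint e hT, ih,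
      Nat.forall_lt_succ_left, Function.iterate_succ_apply, Function.iterate_zero_apply]
    by_cases hyx : c y = c x
    · rw [← hyx, ← adjoint_apply_basis_apply e hT hinj y, adjoint_inner_left]
      simp
    · simp [hyx]

theorem tendsto_cylinderProj (hT : ∀ i x, T i (e x) = if c x = i then e (f x) else 0)
    (hinj : ∀ i, Set.InjOn f {x | c x = i})
    (hsep : ∀ x y, (∀ j, c (f^[j] x) = c (f^[j] y)) → x = y) (x : X) (a : H) :
    Tendsto (fun n => cylinderProj f c T n x a) atTop (𝓝 (⟪e x, a⟫_𝕜 • e x)) := by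
  classical
  have hcoeff : ∀ n y, ⟪e y, cylinderProj f c T n x a - ⟪e x, a⟫_𝕜 • e x⟫_𝕜 =
      if y ≠ x ∧ ∀ j < n, c (f^[j] y) = c (f^[j] x) then ⟪e y, a⟫_𝕜 else 0 := by
    intro n y
    rw [inner_sub_right, inner_smul_right, inner_basis_cylinderProj e hT hinj,
      orthonormal_iff_ite.mp e.orthonormal]
    by_cases hyx : y = x <;> simp [hyx]
  rw [← tendsto_sub_nhds_zero_iff]
  refine e.tendsto_zero_of_norm_inner_le a (fun n y => ?_) (fun y => ?_)
  · rw [hcoeff]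
    split_ifs <;> simp
  · by_cases hyx : y = x
    · simp [hcoeff, hyx]
    obtain ⟨j, hj⟩ : ∃ j, c (f^[j] y) ≠ c (f^[j] x) := by
      by_contra! h
      exact hyx (hsep y x h)
    refine tendsto_const_nhds.congr' (eventually_atTop.mpr ⟨j + 1, fun n hn => ?_⟩)
    exact ((hcoeff n y).trans (if_neg fun h => hj (h.2 j (by omega)))).symm

theorem basis_mem_of_inner_ne_zero (hT : ∀ i x, T i (e x) = if c x = i then e (f x) else 0)
    (hinj : ∀ i, Set.InjOn f {x | c x = i})
    (hsep : ∀ x y, (∀ j, c (f^[j] x) = c (f^[j] y)) → x = y)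
    {M : Submodule 𝕜 H} (hMc : IsClosed (M : Set H)) (hM : M.IsReducing T)
    {x : X} {a : H} (ha : a ∈ M) (hax : ⟪a, e x⟫_𝕜 ≠ 0) : e x ∈ M := by
  have hα : ⟪e x, a⟫_𝕜 ≠ 0 := fun h => hax (inner_eq_zero_symm.mp h)
  refine (M.smul_mem_iff hα).mp <| hMc.mem_of_tendsto (tendsto_cylinderProj e hT hinj hsep x a) ?_
  exact Eventually.of_forall fun n => cylinderProj_mem hM n x ha

theorem exists_inner_basis_apply_ne_zero
    (hT : ∀ i x, T i (e x) = if c x = i then e (f x) else 0)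
    (hinj : ∀ i, Set.InjOn f {x | c x = i}) {M : Submodule 𝕜 H} (hM : M.IsReducing T) {x : X}
    (h : ∃ a ∈ M, ⟪a, e x⟫_𝕜 ≠ 0) : ∃ a ∈ M, ⟪a, e (f x)⟫_𝕜 ≠ 0 := by
  obtain ⟨a, ha, hax⟩ := h
  refine ⟨T (c x) a, (hM _ a ha).1, ?_⟩
  rwa [← adjoint_inner_right, adjoint_apply_basis_apply e hT hinj]

theorem exists_inner_basis_ne_zero_of_apply
    (hT : ∀ i x, T i (e x) = if c x = i then e (f x) else 0)
    {M : Submodule 𝕜 H} (hM : M.IsReducing T) {x : X}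
    (h : ∃ a ∈ M, ⟪a, e (f x)⟫_𝕜 ≠ 0) : ∃ a ∈ M, ⟪a, e x⟫_𝕜 ≠ 0 := by
  obtain ⟨a, ha, hax⟩ := h
  refine ⟨adjoint (T (c x)) a, (hM _ a ha).2, ?_⟩
  rwa [adjoint_inner_left, hT, if_pos rfl]

end ShiftSystem

open ShiftSystem in
theorem stmt_17_general {X : Type*} {k : ℕ} (f : X → X) (c : X → Fin k)
    (hpart : ∀ i : Fin k, Set.InjOn f {x | c x = i})
    (htu : ∀ x y : X, (∀ j : ℕ, c (f^[j] x) = c (f^[j] y)) → x = y)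
    {H : Type*} [NormedAddCommGroup H] [InnerProductSpace ℂ H] [CompleteSpace H]
    (e : HilbertBasis X ℂ H) (T : Fin k → H →L[ℂ] H)
    (hT : ∀ i x, T i (e x) = if c x = i then e (f x) else 0)
    (M : Submodule ℂ H) (hMc : IsClosed (M : Set H))
    (hred : ∀ i : Fin k, ∀ v ∈ M, T i v ∈ M ∧ ContinuousLinearMap.adjoint (T i) v ∈ M) :
    (f '' {x : X | ∃ a ∈ M, (inner ℂ a (e x) : ℂ) ≠ 0} ⊆ {x : X | ∃ a ∈ M, (inner ℂ a (e x) : ℂ) ≠ 0}) ∧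
    (f ⁻¹' {x : X | ∃ a ∈ M, (inner ℂ a (e x) : ℂ) ≠ 0} ⊆ {x : X | ∃ a ∈ M, (inner ℂ a (e x) : ℂ) ≠ 0}) ∧
    M = (Submodule.span ℂ (⇑e '' {x : X | ∃ a ∈ M, (inner ℂ a (e x) : ℂ) ≠ 0})).topologicalClosure := by
  refine ⟨?_, fun x => exists_inner_basis_ne_zero_of_apply e hT hred, ?_⟩
  · rintro _ ⟨x, hx, rfl⟩
    exact exists_inner_basis_apply_ne_zero e hT hpart hred hx
  · exact e.eq_topologicalClosure_span_of_mem M hMc fun x a ha hax =>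
      basis_mem_of_inner_ne_zero e hT hpart htu hMc hred ha hax

theorem stmt_17 {X : Type*} [Countable X] {k : ℕ} (f : X → X) (c : X → Fin k)
    (hpart : ∀ i : Fin k, Set.InjOn f {x | c x = i})
    (htu : ∀ x y : X, (∀ j : ℕ, c (f^[j] x) = c (f^[j] y)) → x = y)
    {H : Type*} [NormedAddCommGroup H] [InnerProductSpace ℂ H] [CompleteSpace H]
    (e : HilbertBasis X ℂ H) (T : Fin k → H →L[ℂ] H)
    (hT : ∀ i x, T i (e x) = if c x = i then e (f x) else 0)
    (M : Submodule ℂ H) (hMc : IsClosed (M : Set H))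
    (hred : ∀ i : Fin k, ∀ v ∈ M, T i v ∈ M ∧ ContinuousLinearMap.adjoint (T i) v ∈ M) :
    (f '' {x : X | ∃ a ∈ M, (inner ℂ a (e x) : ℂ) ≠ 0} ⊆ {x : X | ∃ a ∈ M, (inner ℂ a (e x) : ℂ) ≠ 0}) ∧
    (f ⁻¹' {x : X | ∃ a ∈ M, (inner ℂ a (e x) : ℂ) ≠ 0} ⊆ {x : X | ∃ a ∈ M, (inner ℂ a (e x) : ℂ) ≠ 0}) ∧
    M = (Submodule.span ℂ (⇑e '' {x : X | ∃ a ∈ M, (inner ℂ a (e x) : ℂ) ≠ 0})).topologicalClosure :=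
  stmt_17_general f c hpart htu e T hT M hMc hred
end
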